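/- Let t: U → ℝ be a smooth function on an open set U ⊂ ℝ⁵ with coordinates (x⁰,…,x⁴), and define the coframe ω⁰ = dx⁰ + x¹dx⁴ − 3x²dx³, ω¹ = dx¹ + 3t dx² + 3t² dx³ + t³ dx⁴, ω² = dx² + 2t dx³ + t² dx⁴, ω³ = dx³ + t dx⁴, ω⁴ = dx⁴. Then dω⁰ = ω¹∧ω⁴ − 3ω²∧ω³, dω¹ = 3 dt∧ω², dω² = 2 dt∧ω³, dω³ = dt∧ω⁴, dω⁴ = 0. -/

import Mathlib

/-!
The forms `ω¹, ω², ω³` depend on the point only through `t`: `ωⁱ = Ωⁱ(t)` for a curve `s ↦ Ωⁱ(s)`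
of constant covectors with `∂ₛΩ¹ = 3Ω²`, `∂ₛΩ² = 2Ω³`, `∂ₛΩ³ = ω⁴`, so the chain rule gives
`dωⁱ = dt ∧ ∂ₛΩⁱ(t)`. The form `ω⁰` is affine in `x`, so `dω⁰ = dx¹ ∧ dx⁴ − 3 dx² ∧ dx³`, and the
`t`-dependence cancels in `ω¹ ∧ ω⁴ − 3 ω² ∧ ω³`.
-/

/-- The exterior derivative of a 1-form on `ℝ⁵` evaluated on constant vector
fields `u, v`. -/
noncomputable def dForm (ω : (Fin 5 → ℝ) → (Fin 5 → ℝ) → ℝ) (x u v : Fin 5 → ℝ) : ℝ :=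
  fderiv ℝ (fun y => ω y v) x u - fderiv ℝ (fun y => ω y u) x v

def w0 : (Fin 5 → ℝ) → (Fin 5 → ℝ) → ℝ := fun x v => v 0 + x 1 * v 4 - 3 * x 2 * v 3

def w1 (t : (Fin 5 → ℝ) → ℝ) : (Fin 5 → ℝ) → (Fin 5 → ℝ) → ℝ :=
  fun x v => v 1 + 3 * t x * v 2 + 3 * (t x) ^ 2 * v 3 + (t x) ^ 3 * v 4

def w2 (t : (Fin 5 → ℝ) → ℝ) : (Fin 5 → ℝ) → (Fin 5 → ℝ) → ℝ :=
  fun x v => v 2 + 2 * t x * v 3 + (t x) ^ 2 * v 4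

def w3 (t : (Fin 5 → ℝ) → ℝ) : (Fin 5 → ℝ) → (Fin 5 → ℝ) → ℝ :=
  fun x v => v 3 + t x * v 4

def w4 : (Fin 5 → ℝ) → (Fin 5 → ℝ) → ℝ := fun _ v => v 4

theorem hasDerivAt_cubic (a b c d s : ℝ) :
    HasDerivAt (fun s => a + b * s + c * s ^ 2 + d * s ^ 3) (b + 2 * c * s + 3 * d * s ^ 2) s := by
  have h := ((((hasDerivAt_id s).const_mul b).const_add a).add
    ((hasDerivAt_pow 2 s).const_mul c)).add ((hasDerivAt_pow 3 s).const_mul d)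
  refine h.congr_deriv ?_
  push_cast
  ring

section dForm

variable {ω : (Fin 5 → ℝ) → (Fin 5 → ℝ) → ℝ} {x : Fin 5 → ℝ}

theorem dForm_eq_of_hasFDerivAt {L : (Fin 5 → ℝ) → (Fin 5 → ℝ) →L[ℝ] ℝ}
    (hω : ∀ w, HasFDerivAt (fun y => ω y w) (L w) x) (u v : Fin 5 → ℝ) :
    dForm ω x u v = L v u - L u v := by
  rw [dForm, (hω u).fderiv, (hω v).fderiv]

theorem dForm_comp_eq_fderiv_wedge {t : (Fin 5 → ℝ) → ℝ} {Ω Ω' : ℝ → (Fin 5 → ℝ) → ℝ}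
    (hω : ∀ y, ω y = Ω (t y)) (hΩ : ∀ w, HasDerivAt (fun s => Ω s w) (Ω' (t x) w) (t x))
    (ht : DifferentiableAt ℝ t x) (u v : Fin 5 → ℝ) :
    dForm ω x u v = fderiv ℝ t x u * Ω' (t x) v - fderiv ℝ t x v * Ω' (t x) u := by
  have hcomp (w : Fin 5 → ℝ) :
      HasFDerivAt (fun y => ω y w) (Ω' (t x) w • fderiv ℝ t x) x := by
    simpa only [hω, Function.comp_def] using (hΩ w).comp_hasFDerivAt x ht.hasFDerivAt
  rw [dForm_eq_of_hasFDerivAt hcomp]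
  simp only [FunLike.coe_smul, Pi.smul_apply, smul_eq_mul]
  ring

end dForm

open ContinuousLinearMap in
theorem dForm_w0 (x u v : Fin 5 → ℝ) :
    dForm w0 x u v = (u 1 * v 4 - v 1 * u 4) - 3 * (u 2 * v 3 - v 2 * u 3) := by
  have hw0 (w : Fin 5 → ℝ) : HasFDerivAt (fun y => w0 y w)
      (w 4 • (proj 1 : (Fin 5 → ℝ) →L[ℝ] ℝ) - (3 * w 3) • (proj 2 : (Fin 5 → ℝ) →L[ℝ] ℝ)) x := by
    have h := ((hasFDerivAt_const (w 0) x).add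
      ((hasFDerivAt_apply (𝕜 := ℝ) 1 x).mul_const (w 4))).sub
      (((hasFDerivAt_apply (𝕜 := ℝ) 2 x).const_mul 3).mul_const (w 3))
    refine h.congr_fderiv ?_
    ext y
    simp only [sub_apply, smul_apply, proj_apply, smul_eq_mul, zero_add]
    ring
  rw [dForm_eq_of_hasFDerivAt hw0]
  simp only [sub_apply, smul_apply, proj_apply, smul_eq_mul]
  ring

/- `fun s => wᵢ (fun _ => s) 0` is the curve `Ωⁱ` of the header: `wᵢ t y = Ωⁱ (t y)` holds by `rfl`. -/
theorem hasDerivAt_w1_const (w : Fin 5 → ℝ) (s : ℝ) :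
    HasDerivAt (fun s => w1 (fun _ => s) 0 w) (3 * w2 (fun _ => s) 0 w) s := by
  convert hasDerivAt_cubic (w 1) (3 * w 2) (3 * w 3) (w 4) s using 1
  · funext r
    simp only [w1]
    ring
  · simp only [w2]
    ring

theorem hasDerivAt_w2_const (w : Fin 5 → ℝ) (s : ℝ) :
    HasDerivAt (fun s => w2 (fun _ => s) 0 w) (2 * w3 (fun _ => s) 0 w) s := by
  convert hasDerivAt_cubic (w 2) (2 * w 3) (w 4) 0 s using 1
  · funext r
    simp only [w2]
    ring
  · simp only [w3]
    ring

theorem hasDerivAt_w3_const (w : Fin 5 → ℝ) (s : ℝ) :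
    HasDerivAt (fun s => w3 (fun _ => s) 0 w) (w4 0 w) s := by
  convert hasDerivAt_cubic (w 3) (w 4) 0 0 s using 1
  · funext r
    simp only [w3]
    ring
  · simp only [w4]
    ring

section dt_wedge

variable {t : (Fin 5 → ℝ) → ℝ} {x : Fin 5 → ℝ}

theorem dForm_w1 (ht : DifferentiableAt ℝ t x) (u v : Fin 5 → ℝ) :
    dForm (w1 t) x u v = 3 * (fderiv ℝ t x u * w2 t x v - fderiv ℝ t x v * w2 t x u) := by
  rw [dForm_comp_eq_fderiv_wedge (ω := w1 t) (Ω := fun s => w1 (fun _ => s) 0)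
    (Ω' := fun s w => 3 * w2 (fun _ => s) 0 w) (fun _ => rfl) (hasDerivAt_w1_const · (t x)) ht]
  simp only [w2]
  ring

theorem dForm_w2 (ht : DifferentiableAt ℝ t x) (u v : Fin 5 → ℝ) :
    dForm (w2 t) x u v = 2 * (fderiv ℝ t x u * w3 t x v - fderiv ℝ t x v * w3 t x u) := by
  rw [dForm_comp_eq_fderiv_wedge (ω := w2 t) (Ω := fun s => w2 (fun _ => s) 0)
    (Ω' := fun s w => 2 * w3 (fun _ => s) 0 w) (fun _ => rfl) (hasDerivAt_w2_const · (t x)) ht]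
  simp only [w3]
  ring

theorem dForm_w3 (ht : DifferentiableAt ℝ t x) (u v : Fin 5 → ℝ) :
    dForm (w3 t) x u v = fderiv ℝ t x u * w4 x v - fderiv ℝ t x v * w4 x u :=
  dForm_comp_eq_fderiv_wedge (ω := w3 t) (Ω := fun s => w3 (fun _ => s) 0)
    (Ω' := fun _ => w4 0) (fun _ => rfl) (hasDerivAt_w3_const · (t x)) ht u v

end dt_wedge

/-- Structure equations for the adapted coframe of a marked contact Engel structure:
`dω⁰ = ω¹∧ω⁴ − 3ω²∧ω³`, `dω¹ = 3dt∧ω²`, `dω² = 2dt∧ω³`, `dω³ = dt∧ω⁴`, `dω⁴ = 0`. -/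
theorem marked_coframe_structure_equations
    (U : Set (Fin 5 → ℝ)) (hU : IsOpen U) (t : (Fin 5 → ℝ) → ℝ)
    (ht : ContDiffOn ℝ (⊤ : ℕ∞) t U) :
    ∀ x ∈ U, ∀ u v : Fin 5 → ℝ,
      dForm w0 x u v =
        (w1 t x u * w4 x v - w1 t x v * w4 x u) -
          3 * (w2 t x u * w3 t x v - w2 t x v * w3 t x u) ∧
      dForm (w1 t) x u v =
        3 * (fderiv ℝ t x u * w2 t x v - fderiv ℝ t x v * w2 t x u) ∧
      dForm (w2 t) x u v =
        2 * (fderiv ℝ t x u * w3 t x v - fderiv ℝ t x v * w3 t x u) ∧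
      dForm (w3 t) x u v =
        fderiv ℝ t x u * w4 x v - fderiv ℝ t x v * w4 x u ∧
      dForm w4 x u v = 0 := by
  intro x hx u v
  have htx : DifferentiableAt ℝ t x :=
    (ht.contDiffAt (hU.mem_nhds hx)).differentiableAt (by simp)
  refine ⟨?_, dForm_w1 htx u v, dForm_w2 htx u v, dForm_w3 htx u v, by simp [dForm, w4]⟩
  rw [dForm_w0]
  simp only [w1, w2, w3, w4]
  ring
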